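/- Let S be a complete and decomposable SPN with strictly positive edge weights w. Define locally normalized weights by w'_{ij} = w_{ij} f_{v_j}(1|w) / (sum over children j' of v_i of w_{ij'} f_{v_{j'}}(1|w)) for each sum node v_i and child v_j. Then: (1) sum over children j of w'_{ij} = 1 for every sum node v_i; and (2) for every node v and every input x in {0,1}^N, f_v(x|w') = f_v(x|w) / f_v(1|w); in particular f_S(1|w') = 1 and f_S(x|w') = f_S(x|w) / f_S(1|w), so the reweighted SPN is normal and defines the same normalized distribution as S. -/
import Mathlib


inductive NodeKind
  | sum
  | prod
  | leaf
deriving DecidableEq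

/-- A sum-product network over `N` Boolean variables, with node set `V`:
a rooted DAG (acyclicity witnessed by a rank function) whose leaves are
indicator variables and whose internal nodes are sum or product nodes. -/
structure SPN (V : Type) [Fintype V] [DecidableEq V] (N : ℕ) where
  root : V
  kind : V → NodeKind
  children : V → Finset V
  leaf_children : ∀ v, kind v = NodeKind.leaf → children v = ∅
  internal_nonempty : ∀ v, kind v ≠ NodeKind.leaf → (children v).Nonempty
  root_no_parent : ∀ u, root ∉ children u
  leafVar : V → Fin N
  leafSign : V → Bool
  rank : V → ℕ
  rank_lt : ∀ v, ∀ u ∈ children v, rank u < rank v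

namespace SPN

variable {V : Type} [Fintype V] [DecidableEq V] {N : ℕ}

/-- The value `f_v(·|w)` of every node, where `w` assigns a weight to every
edge `(v,u)` out of a sum node and `L` gives the value of every leaf. -/
noncomputable def evalWith (S : SPN V N) (w : V × V → ℝ) (L : V → ℝ) (v : V) : ℝ :=
  match S.kind v with
  | NodeKind.leaf => L v
  | NodeKind.sum => ∑ u ∈ (S.children v).attach, w (v, u.1) * S.evalWith w L u.1
  | NodeKind.prod => ∏ u ∈ (S.children v).attach, S.evalWith w L u.1
termination_by S.rank v
decreasing_by
  · exact S.rank_lt v u.1 u.2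
  · exact S.rank_lt v u.1 u.2

/-- The leaf values determined by an input `x ∈ {0,1}^N`: the leaf over
variable `X_n` is the indicator `I[x_n = leafSign]`. -/
def ind (S : SPN V N) (x : Fin N → Bool) (v : V) : ℝ :=
  if x (S.leafVar v) = S.leafSign v then 1 else 0

/-- The scope of a node: its variable at a leaf, the union of the scopes of
the children at an internal node. -/
noncomputable def scope (S : SPN V N) (v : V) : Finset (Fin N) :=
  match S.kind v with
  | NodeKind.leaf => {S.leafVar v}
  | NodeKind.sum => (S.children v).attach.sup fun u => S.scope u.1
  | NodeKind.prod => (S.children v).attach.sup fun u => S.scope u.1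
termination_by S.rank v
decreasing_by
  · exact S.rank_lt v u.1 u.2
  · exact S.rank_lt v u.1 u.2

/-- An SPN is complete if all children of every sum node have the same scope. -/
def Complete (S : SPN V N) : Prop :=
  ∀ v, S.kind v = NodeKind.sum →
    ∀ u₁ ∈ S.children v, ∀ u₂ ∈ S.children v, S.scope u₁ = S.scope u₂

/-- An SPN is decomposable if the children of every product node have
pairwise disjoint scopes. -/
def Decomposable (S : SPN V N) : Prop :=
  ∀ v, S.kind v = NodeKind.prod →
    ∀ u₁ ∈ S.children v, ∀ u₂ ∈ S.children v, u₁ ≠ u₂ →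
      Disjoint (S.scope u₁) (S.scope u₂)

/-- `(TV, TE)` is an induced SPN (induced tree) of `S`: a subgraph of `S`,
generated from the root, containing exactly one child of every sum node it
contains and all children of every product node it contains, together with
the corresponding edges. -/
structure IsInducedTree (S : SPN V N) (TV : Finset V) (TE : Finset (V × V)) : Prop where
  root_mem : S.root ∈ TV
  edges_sub : ∀ e ∈ TE, e.1 ∈ TV ∧ e.2 ∈ TV ∧ e.2 ∈ S.children e.1
  reach : ∀ v ∈ TV, v ≠ S.root → ∃ u, (u, v) ∈ TE
  sum_unique : ∀ v ∈ TV, S.kind v = NodeKind.sum → ∃! u, u ∈ S.children v ∧ u ∈ TV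
  sum_edge : ∀ v ∈ TV, S.kind v = NodeKind.sum → ∀ u ∈ S.children v, u ∈ TV → (v, u) ∈ TE
  prod_mem : ∀ v ∈ TV, S.kind v = NodeKind.prod → ∀ u ∈ S.children v, u ∈ TV
  prod_edge : ∀ v ∈ TV, S.kind v = NodeKind.prod → ∀ u ∈ S.children v, (v, u) ∈ TE

end SPN

/-- Let `S` be a complete and decomposable SPN with strictly
positive edge weights `w`, and define the locally normalized weights
`w' (v_i, v_j) = w (v_i,v_j) f_{v_j}(1|w) / ∑_{j'} w (v_i,v_j') f_{v_j'}(1|w)`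
on the sum edges.  Then (1) the `w'`-weights out of every sum node sum to one;
and (2) for every node `v` and input `x`, `f_v(x|w') = f_v(x|w) / f_v(1|w)`;
in particular `f_S(1|w') = 1` and `f_S(x|w') = f_S(x|w) / f_S(1|w)`, so the
reweighted SPN is normal and defines the same normalized distribution. -/
theorem locally_normalized_spn
    {V : Type} [Fintype V] [DecidableEq V] {N : ℕ} (S : SPN V N)
    (hC : S.Complete) (hD : S.Decomposable)
    (w : V × V → ℝ) (hw : ∀ e, 0 < w e)
    (w' : V × V → ℝ)
    (hw' : ∀ vi, S.kind vi = NodeKind.sum → ∀ vj ∈ S.children vi,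
      w' (vi, vj) =
        w (vi, vj) * S.evalWith w (fun _ => 1) vj /
          ∑ u ∈ S.children vi, w (vi, u) * S.evalWith w (fun _ => 1) u) :
    (∀ vi, S.kind vi = NodeKind.sum →
      ∑ u ∈ S.children vi, w' (vi, u) = 1) ∧
    (∀ (v : V) (x : Fin N → Bool),
      S.evalWith w' (S.ind x) v =
        S.evalWith w (S.ind x) v / S.evalWith w (fun _ => 1) v) ∧
    S.evalWith w' (fun _ => 1) S.root = 1 ∧
    (∀ x : Fin N → Bool,
      S.evalWith w' (S.ind x) S.root =
        S.evalWith w (S.ind x) S.root /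
          S.evalWith w (fun _ => 1) S.root) := by

  -- positivity of the all-ones evaluation
  have pos : ∀ n v, S.rank v ≤ n → 0 < S.evalWith w (fun _ => 1) v := by
    intro n
    induction n with
    | zero =>
      intro v hv
      rw [SPN.evalWith]
      cases hk : S.kind v with
      | leaf => exact one_pos
      | sum =>
        exfalso
        obtain ⟨u, hu⟩ := S.internal_nonempty v (by simp [hk])
        exact absurd (lt_of_lt_of_le (S.rank_lt v u hu) hv) (Nat.not_lt_zero _)
      | prod =>
        exfalso
        obtain ⟨u, hu⟩ := S.internal_nonempty v (by simp [hk])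
        exact absurd (lt_of_lt_of_le (S.rank_lt v u hu) hv) (Nat.not_lt_zero _)
    | succ n ih =>
      intro v hv
      rw [SPN.evalWith]
      cases hk : S.kind v with
      | leaf => exact one_pos
      | sum =>
        apply Finset.sum_pos
        · intro u _
          exact mul_pos (hw _) (ih u.1 (Nat.lt_succ_iff.mp
            (lt_of_lt_of_le (S.rank_lt v u.1 u.2) hv)))
        · obtain ⟨u, hu⟩ := S.internal_nonempty v (by simp [hk])
          exact ⟨⟨u, hu⟩, Finset.mem_attach _ _⟩
      | prod =>
        apply Finset.prod_pos
        intro u _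
        exact ih u.1 (Nat.lt_succ_iff.mp (lt_of_lt_of_le (S.rank_lt v u.1 u.2) hv))
  have pos' : ∀ v, 0 < S.evalWith w (fun _ => 1) v := fun v => pos (S.rank v) v le_rfl
  -- denominators
  have denom : ∀ vi, S.kind vi = NodeKind.sum →
      S.evalWith w (fun _ => 1) vi
        = ∑ u ∈ S.children vi, w (vi, u) * S.evalWith w (fun _ => 1) u := by
    intro vi hk
    rw [SPN.evalWith, hk, Finset.sum_attach (S.children vi)
      (fun u => w (vi, u) * S.evalWith w (fun _ => 1) u)]
  -- part (1)
  have part1 : ∀ vi, S.kind vi = NodeKind.sum →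
      ∑ u ∈ S.children vi, w' (vi, u) = 1 := by
    intro vi hk
    have hD0 : (0:ℝ) < ∑ u ∈ S.children vi, w (vi, u) * S.evalWith w (fun _ => 1) u := by
      rw [← denom vi hk]; exact pos' vi
    rw [Finset.sum_congr rfl (fun u hu => hw' vi hk u hu), ← Finset.sum_div]
    exact div_self (ne_of_gt hD0)
  -- part (2), general leaf valuation
  have main : ∀ (L : V → ℝ) n v, S.rank v ≤ n →
      S.evalWith w' L v = S.evalWith w L v / S.evalWith w (fun _ => 1) v := by
    intro L n
    induction n with
    | zero =>
      intro v hv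
      rw [SPN.evalWith, SPN.evalWith, SPN.evalWith]
      cases hk : S.kind v with
      | leaf => simp
      | sum =>
        exfalso
        obtain ⟨u, hu⟩ := S.internal_nonempty v (by simp [hk])
        exact absurd (lt_of_lt_of_le (S.rank_lt v u hu) hv) (Nat.not_lt_zero _)
      | prod =>
        exfalso
        obtain ⟨u, hu⟩ := S.internal_nonempty v (by simp [hk])
        exact absurd (lt_of_lt_of_le (S.rank_lt v u hu) hv) (Nat.not_lt_zero _)
    | succ n ih =>
      intro v hv
      have hch : ∀ u ∈ S.children v,
          S.evalWith w' L u = S.evalWith w L u / S.evalWith w (fun _ => 1) u := by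
        intro u hu
        exact ih u (Nat.lt_succ_iff.mp (lt_of_lt_of_le (S.rank_lt v u hu) hv))
      cases hk : S.kind v with
      | leaf =>
        rw [SPN.evalWith, SPN.evalWith, SPN.evalWith, hk]
        simp
      | sum =>
        have hD0 : (0:ℝ) < ∑ u ∈ S.children v, w (v, u) * S.evalWith w (fun _ => 1) u := by
          rw [← denom v hk]; exact pos' v
        rw [SPN.evalWith, SPN.evalWith, SPN.evalWith, hk]
        simp only
        rw [Finset.sum_div]
        apply Finset.sum_congr rfl
        intro u _
        rw [hw' v hk u.1 u.2, hch u.1 u.2,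
          Finset.sum_attach (S.children v) (fun u => w (v, u) * S.evalWith w (fun _ => 1) u)]
        have h1 := ne_of_gt (pos' u.1)
        field_simp
      | prod =>
        rw [SPN.evalWith, SPN.evalWith, SPN.evalWith, hk]
        simp only
        rw [← Finset.prod_div_distrib]
        apply Finset.prod_congr rfl
        intro u _
        exact hch u.1 u.2
  have main' : ∀ (L : V → ℝ) v,
      S.evalWith w' L v = S.evalWith w L v / S.evalWith w (fun _ => 1) v :=
    fun L v => main L (S.rank v) v le_rfl
  refine ⟨part1, fun v x => main' _ v, ?_, fun x => main' _ S.root⟩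
  rw [main' (fun _ => 1) S.root]
  exact div_self (ne_of_gt (pos' S.root))
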